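/- arXiv:2510.25918 — 4 statements merged into one kernel-verified Lean document; each statement's English description precedes it below -/
import Mathlib

section
/- Let b, c, μ, ν : ℝ² → ℝ be smooth. The curvature matrix R̄ of the connection ω̄ = [[0, dx, dy], [μ dx, 0, b dx], [ν dy, c dy, 0]] vanishes identically if and only if all five functions bν + μ_y, cμ + ν_x, bc, c_x + ν, and b_y + μ vanish identically. -/
noncomputable def pdx (f : ℝ × ℝ → ℝ) (p : ℝ × ℝ) : ℝ := deriv (fun t => f (t, p.2)) p.1
noncomputable def pdy (f : ℝ × ℝ → ℝ) (p : ℝ × ℝ) : ℝ := deriv (fun t => f (p.1, t)) p.2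

noncomputable def omX (b μ : ℝ × ℝ → ℝ) (p : ℝ × ℝ) : Matrix (Fin 3) (Fin 3) ℝ :=
  !![0, 1, 0; μ p, 0, b p; 0, 0, 0]

noncomputable def omY (c ν : ℝ × ℝ → ℝ) (p : ℝ × ℝ) : Matrix (Fin 3) (Fin 3) ℝ :=
  !![0, 0, 1; 0, 0, 0; ν p, c p, 0]

/-- The dx∧dy coefficient of the curvature R̄ = dω̄ − ω̄ ∧ ω̄ of the connection
ω̄ = [[0,dx,dy],[μdx,0,bdx],[νdy,cdy,0]] (row-frame convention). -/
noncomputable def curv (b c μ ν : ℝ × ℝ → ℝ) (p : ℝ × ℝ) : Matrix (Fin 3) (Fin 3) ℝ :=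
  Matrix.of fun i j =>
    pdx (fun q => omY c ν q j i) p - pdy (fun q => omX b μ q j i) p
      - (omX b μ p * omY c ν p - omY c ν p * omX b μ p) j i

theorem curvature_vanishes_iff_five_functions_vanish
    (b c μ ν : ℝ × ℝ → ℝ)
    (hb : ContDiff ℝ (⊤ : ℕ∞) b) (hc : ContDiff ℝ (⊤ : ℕ∞) c)
    (hμ : ContDiff ℝ (⊤ : ℕ∞) μ) (hν : ContDiff ℝ (⊤ : ℕ∞) ν) :
    (∀ p : ℝ × ℝ, curv b c μ ν p = 0) ↔
      (∀ p : ℝ × ℝ,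
        b p * ν p + pdy μ p = 0 ∧
        c p * μ p + pdx ν p = 0 ∧
        b p * c p = 0 ∧
        pdx c p + ν p = 0 ∧
        pdy b p + μ p = 0) := by
  constructor
  · intro h p
    have h01 := congrFun (congrFun (h p) 0) 1
    have h11 := congrFun (congrFun (h p) 1) 1
    have h21 := congrFun (congrFun (h p) 2) 1
    have h02 := congrFun (congrFun (h p) 0) 2
    have h12 := congrFun (congrFun (h p) 1) 2
    simp [curv, omX, omY, pdx, pdy, Matrix.mul_apply, Fin.sum_univ_three] at h01 h11 h21 h02 h12
    refine ⟨?_, ?_, ?_, ?_, ?_⟩ <;> simp [pdx, pdy] <;>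
      first
      | linarith
      | exact h11
  · intro h p
    obtain ⟨h1, h2, h3, h4, h5⟩ := h p
    simp only [pdx, pdy] at h1 h2 h3 h4 h5
    ext i j
    fin_cases i <;> fin_cases j <;>
      simp [curv, omX, omY, pdx, pdy, Matrix.mul_apply, Fin.sum_univ_three] <;>
      first
      | linarith
      | (rcases mul_eq_zero.mp h3 with h' | h' <;> simp [h'])
end

section
/- Let b, c : ℝ² → ℝ be smooth with b·c ≠ 0 on a domain, and suppose ∂²/∂x∂y log(b/c) = 0, ∂/∂x( (1/(bc)) ∂²/∂x∂y log c ) = 0, and ∂/∂y( (1/(bc)) ∂²/∂x∂y log b ) = 0 hold identically on the domain. Then the function K = (-1/(8bc)) ∂²/∂x∂y log(bc) is constant on the (connected) domain. -/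
section helpers
variable {f g : ℝ × ℝ → ℝ} {U : Set (ℝ × ℝ)} {p : ℝ × ℝ}

lemma lineX_diff (hf : DifferentiableAt ℝ f p) :
    DifferentiableAt ℝ (fun t => f (t, p.2)) p.1 := by
  have h : DifferentiableAt ℝ (fun t : ℝ => (t, p.2)) p.1 :=
    differentiableAt_id.prodMk (differentiableAt_const _)
  exact hf.comp p.1 h

lemma lineY_diff (hf : DifferentiableAt ℝ f p) :
    DifferentiableAt ℝ (fun t => f (p.1, t)) p.2 := by
  have h : DifferentiableAt ℝ (fun t : ℝ => (p.1, t)) p.2 :=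
    (differentiableAt_const _).prodMk differentiableAt_id
  exact hf.comp p.2 h

lemma pdx_eq_fderiv (hf : DifferentiableAt ℝ f p) :
    pdx f p = fderiv ℝ f p (1, 0) := by
  have h : HasDerivAt (fun t : ℝ => (t, p.2)) ((1:ℝ), (0:ℝ)) p.1 :=
    (hasDerivAt_id p.1).prodMk (hasDerivAt_const p.1 p.2)
  have := (hf.hasFDerivAt.comp_hasDerivAt p.1 h)
  simpa [pdx, Function.comp_def] using this.deriv

lemma pdy_eq_fderiv (hf : DifferentiableAt ℝ f p) :
    pdy f p = fderiv ℝ f p (0, 1) := by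
  have h : HasDerivAt (fun t : ℝ => (p.1, t)) ((0:ℝ), (1:ℝ)) p.2 :=
    (hasDerivAt_const p.2 p.1).prodMk (hasDerivAt_id p.2)
  have := (hf.hasFDerivAt.comp_hasDerivAt p.2 h)
  simpa [pdy, Function.comp_def] using this.deriv

lemma pdx_congrOn (hU : IsOpen U) (hp : p ∈ U) (h : ∀ q ∈ U, f q = g q) :
    pdx f p = pdx g p := by
  have hopen : IsOpen {t : ℝ | (t, p.2) ∈ U} :=
    hU.preimage (by continuity)
  have hev : (fun t => f (t, p.2)) =ᶠ[nhds p.1] (fun t => g (t, p.2)) := by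
    filter_upwards [hopen.mem_nhds (by simpa using hp)] with t ht using h _ ht
  exact hev.deriv_eq

lemma pdy_congrOn (hU : IsOpen U) (hp : p ∈ U) (h : ∀ q ∈ U, f q = g q) :
    pdy f p = pdy g p := by
  have hopen : IsOpen {t : ℝ | (p.1, t) ∈ U} :=
    hU.preimage (by continuity)
  have hev : (fun t => f (p.1, t)) =ᶠ[nhds p.2] (fun t => g (p.1, t)) := by
    filter_upwards [hopen.mem_nhds (by simpa using hp)] with t ht using h _ ht
  exact hev.deriv_eq

lemma diffAt_of_contDiffOn (hU : IsOpen U) (hf : ContDiffOn ℝ (⊤ : ℕ∞) f U) (hp : p ∈ U) :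
    DifferentiableAt ℝ f p :=
  (hf.contDiffAt (hU.mem_nhds hp)).differentiableAt (by simp)

lemma pdx_contDiffOn (hU : IsOpen U) (hf : ContDiffOn ℝ (⊤ : ℕ∞) f U) :
    ContDiffOn ℝ (⊤ : ℕ∞) (pdx f) U := by
  have h : ContDiffOn ℝ (⊤ : ℕ∞) (fun q => fderiv ℝ f q ((1:ℝ), (0:ℝ))) U :=
    (hf.fderiv_of_isOpen hU (by simp)).clm_apply contDiffOn_const
  exact h.congr fun q hq => pdx_eq_fderiv (diffAt_of_contDiffOn hU hf hq)

lemma pdy_contDiffOn (hU : IsOpen U) (hf : ContDiffOn ℝ (⊤ : ℕ∞) f U) :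
    ContDiffOn ℝ (⊤ : ℕ∞) (pdy f) U := by
  have h : ContDiffOn ℝ (⊤ : ℕ∞) (fun q => fderiv ℝ f q ((0:ℝ), (1:ℝ))) U :=
    (hf.fderiv_of_isOpen hU (by simp)).clm_apply contDiffOn_const
  exact h.congr fun q hq => pdy_eq_fderiv (diffAt_of_contDiffOn hU hf hq)

lemma pdx_sub (hf : DifferentiableAt ℝ f p) (hg : DifferentiableAt ℝ g p) :
    pdx (fun q => f q - g q) p = pdx f p - pdx g p := by
  simpa [pdx] using deriv_fun_sub (lineX_diff hf) (lineX_diff hg)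

lemma pdx_add (hf : DifferentiableAt ℝ f p) (hg : DifferentiableAt ℝ g p) :
    pdx (fun q => f q + g q) p = pdx f p + pdx g p := by
  simpa [pdx] using deriv_fun_add (lineX_diff hf) (lineX_diff hg)

lemma pdy_sub (hf : DifferentiableAt ℝ f p) (hg : DifferentiableAt ℝ g p) :
    pdy (fun q => f q - g q) p = pdy f p - pdy g p := by
  simpa [pdy] using deriv_fun_sub (lineY_diff hf) (lineY_diff hg)

lemma pdy_add (hf : DifferentiableAt ℝ f p) (hg : DifferentiableAt ℝ g p) :
    pdy (fun q => f q + g q) p = pdy f p + pdy g p := by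
  simpa [pdy] using deriv_fun_add (lineY_diff hf) (lineY_diff hg)

end helpers

section
variable {F : ℝ × ℝ → ℝ} {U : Set (ℝ × ℝ)} {p : ℝ × ℝ}

lemma fderiv_zero_test (hd : DifferentiableAt ℝ F p)
    (hx : fderiv ℝ F p (1,0) = 0) (hy : fderiv ℝ F p (0,1) = 0) :
    fderiv ℝ F p = 0 := by
  refine ContinuousLinearMap.ext fun v => ?_
  have hv : (v : ℝ × ℝ) = v.1 • ((1:ℝ), (0:ℝ)) + v.2 • ((0:ℝ), (1:ℝ)) := by
    ext <;> simp
  rw [ContinuousLinearMap.zero_apply, hv, map_add, map_smul, map_smul, hx, hy]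
  simp

lemma locally_const (hU : IsOpen U) (hF : ContDiffOn ℝ (⊤ : ℕ∞) F U)
    (h0 : ∀ q ∈ U, fderiv ℝ F q = 0) (hp : p ∈ U) :
    ∃ ε > 0, Metric.ball p ε ⊆ U ∧ ∀ q ∈ Metric.ball p ε, F q = F p := by
  obtain ⟨ε, hε, hsub⟩ := Metric.isOpen_iff.1 hU p hp
  refine ⟨ε, hε, hsub, fun q hq => ?_⟩
  refine (convex_ball p ε).is_const_of_fderivWithin_eq_zero
    ((hF.mono hsub).differentiableOn (by simp)) (fun z hz => ?_) hq (Metric.mem_ball_self hε)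
  rw [fderivWithin_of_isOpen Metric.isOpen_ball hz]
  exact h0 z (hsub hz)

lemma const_on_connected (hU : IsOpen U) (hconn : IsPreconnected U)
    (hF : ContDiffOn ℝ (⊤ : ℕ∞) F U) (h0 : ∀ q ∈ U, fderiv ℝ F q = 0)
    (hp : p ∈ U) : ∀ q ∈ U, F q = F p := by
  set u : Set (ℝ × ℝ) := {z | ∃ ε > 0, Metric.ball z ε ⊆ U ∧ ∀ w ∈ Metric.ball z ε, F w = F p}
  set v : Set (ℝ × ℝ) := {z | ∃ ε > 0, Metric.ball z ε ⊆ U ∧ ∀ w ∈ Metric.ball z ε, F w ≠ F p}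
  have hu : IsOpen u := by
    refine Metric.isOpen_iff.2 fun z ⟨ε, hε, hsub, hconst⟩ => ?_
    refine ⟨ε, hε, fun w hw => ?_⟩
    refine ⟨ε - dist w z, by simp [hw, Metric.mem_ball.1 hw], fun x hx => ?_, fun x hx => hconst x ?_⟩
    · have h1 := Metric.mem_ball.1 hx
      have h2 := Metric.mem_ball.1 hw
      exact hsub (Metric.mem_ball.2 (lt_of_le_of_lt (dist_triangle x w z) (by linarith)))
    · have h1 := Metric.mem_ball.1 hx
      have h2 := Metric.mem_ball.1 hw
      exact Metric.mem_ball.2 (lt_of_le_of_lt (dist_triangle x w z) (by linarith))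
  have hv : IsOpen v := by
    refine Metric.isOpen_iff.2 fun z ⟨ε, hε, hsub, hconst⟩ => ?_
    refine ⟨ε, hε, fun w hw => ?_⟩
    refine ⟨ε - dist w z, by simp [hw, Metric.mem_ball.1 hw], fun x hx => ?_, fun x hx => hconst x ?_⟩
    · have h1 := Metric.mem_ball.1 hx
      have h2 := Metric.mem_ball.1 hw
      exact hsub (Metric.mem_ball.2 (lt_of_le_of_lt (dist_triangle x w z) (by linarith)))
    · have h1 := Metric.mem_ball.1 hx
      have h2 := Metric.mem_ball.1 hw
      exact Metric.mem_ball.2 (lt_of_le_of_lt (dist_triangle x w z) (by linarith))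
  have hcover : U ⊆ u ∪ v := by
    intro z hz
    obtain ⟨ε, hε, hsub, hconst⟩ := locally_const hU hF h0 hz
    by_cases hzp : F z = F p
    · exact Or.inl ⟨ε, hε, hsub, fun w hw => (hconst w hw).trans hzp⟩
    · exact Or.inr ⟨ε, hε, hsub, fun w hw => (hconst w hw).symm ▸ hzp⟩
  have hpu : p ∈ u := by
    obtain ⟨ε, hε, hsub, hconst⟩ := locally_const hU hF h0 hp
    exact ⟨ε, hε, hsub, hconst⟩
  intro q hq
  by_contra hqF
  have hqv : q ∈ v := by
    rcases hcover hq with h | h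
    · obtain ⟨ε, hε, _, hconst⟩ := h
      exact absurd (hconst q (Metric.mem_ball_self hε)) hqF
    · exact h
  obtain ⟨z, hzU, hzu, hzv⟩ := hconn u v hu hv hcover ⟨p, hp, hpu⟩ ⟨q, hq, hqv⟩
  obtain ⟨ε₁, hε₁, _, hc₁⟩ := hzu
  obtain ⟨ε₂, hε₂, _, hc₂⟩ := hzv
  exact hc₂ z (Metric.mem_ball_self hε₂) (hc₁ z (Metric.mem_ball_self hε₁))
end


theorem gaussian_curvature_constant_of_projective_applicability
    (U : Set (ℝ × ℝ)) (hUopen : IsOpen U) (hUconn : IsConnected U)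
    (b c : ℝ × ℝ → ℝ)
    (hb : ContDiffOn ℝ (⊤ : ℕ∞) b U) (hc : ContDiffOn ℝ (⊤ : ℕ∞) c U)
    (hbc : ∀ p ∈ U, b p * c p ≠ 0)
    (h1 : ∀ p ∈ U, pdx (pdy (fun q => Real.log (b q / c q))) p = 0)
    (h2 : ∀ p ∈ U, pdx (fun q =>
            (1 / (b q * c q)) * pdx (pdy (fun r => Real.log (c r))) q) p = 0)
    (h3 : ∀ p ∈ U, pdy (fun q =>
            (1 / (b q * c q)) * pdx (pdy (fun r => Real.log (b r))) q) p = 0) :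
    ∃ K₀ : ℝ, ∀ p ∈ U,
      (-1 / (8 * b p * c p)) * pdx (pdy (fun q => Real.log (b q * c q))) p = K₀ := by
  obtain ⟨p₀, hp₀⟩ := hUconn.nonempty
  have hbne : ∀ p ∈ U, b p ≠ 0 := fun p hp => left_ne_zero_of_mul (hbc p hp)
  have hcne : ∀ p ∈ U, c p ≠ 0 := fun p hp => right_ne_zero_of_mul (hbc p hp)
  set Lb : ℝ × ℝ → ℝ := fun r => Real.log (b r) with hLbdef
  set Lc : ℝ × ℝ → ℝ := fun r => Real.log (c r) with hLcdef
  have hLb : ContDiffOn ℝ (⊤ : ℕ∞) Lb U := hb.log hbne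
  have hLc : ContDiffOn ℝ (⊤ : ℕ∞) Lc U := hc.log hcne
  have hpdyLb : ContDiffOn ℝ (⊤ : ℕ∞) (pdy Lb) U := pdy_contDiffOn hUopen hLb
  have hpdyLc : ContDiffOn ℝ (⊤ : ℕ∞) (pdy Lc) U := pdy_contDiffOn hUopen hLc
  -- mixed second partials of log b and log c agree on U
  have hAB : ∀ p ∈ U, pdx (pdy Lb) p = pdx (pdy Lc) p := by
    intro p hp
    have e2 : ∀ q ∈ U, pdy (fun r => Real.log (b r / c r)) q = pdy Lb q - pdy Lc q := by
      intro q hq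
      have := pdy_congrOn (f := fun r => Real.log (b r / c r))
        (g := fun r => Lb r - Lc r) hUopen hq
        (fun r hr => Real.log_div (hbne r hr) (hcne r hr))
      rw [this]
      exact pdy_sub (diffAt_of_contDiffOn hUopen hLb hq) (diffAt_of_contDiffOn hUopen hLc hq)
    have e3 : pdx (pdy (fun q => Real.log (b q / c q))) p
        = pdx (pdy Lb) p - pdx (pdy Lc) p := by
      have := pdx_congrOn (f := pdy (fun r => Real.log (b r / c r)))
        (g := fun q => pdy Lb q - pdy Lc q) hUopen hp e2
      rw [this]
      exact pdx_sub (diffAt_of_contDiffOn hUopen hpdyLb hp)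
        (diffAt_of_contDiffOn hUopen hpdyLc hp)
    have h := h1 p hp
    rw [e3] at h
    linarith
  set F : ℝ × ℝ → ℝ := fun q => 1 / (b q * c q) * pdx (pdy Lc) q with hFdef
  have hF : ContDiffOn ℝ (⊤ : ℕ∞) F U :=
    (contDiffOn_const.div (hb.mul hc) hbc).mul (pdx_contDiffOn hUopen hpdyLc)
  have hFx : ∀ p ∈ U, pdx F p = 0 := h2
  have hFy : ∀ p ∈ U, pdy F p = 0 := by
    intro p hp
    have hcongr : ∀ q ∈ U, F q = 1 / (b q * c q) * pdx (pdy Lb) q := by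
      intro q hq
      rw [hFdef]
      simp only
      rw [hAB q hq]
    rw [pdy_congrOn (g := fun q => 1 / (b q * c q) * pdx (pdy Lb) q) hUopen hp hcongr]
    exact h3 p hp
  have h0 : ∀ q ∈ U, fderiv ℝ F q = 0 := by
    intro q hq
    have hd := diffAt_of_contDiffOn hUopen hF hq
    exact fderiv_zero_test hd (by rw [← pdx_eq_fderiv hd]; exact hFx q hq)
      (by rw [← pdy_eq_fderiv hd]; exact hFy q hq)
  have hconst := const_on_connected hUopen hUconn.isPreconnected hF h0 hp₀
  refine ⟨(-1 / 4) * F p₀, fun p hp => ?_⟩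
  have e2 : ∀ q ∈ U, pdy (fun r => Real.log (b r * c r)) q = pdy Lb q + pdy Lc q := by
    intro q hq
    have := pdy_congrOn (f := fun r => Real.log (b r * c r))
      (g := fun r => Lb r + Lc r) hUopen hq
      (fun r hr => Real.log_mul (hbne r hr) (hcne r hr))
    rw [this]
    exact pdy_add (diffAt_of_contDiffOn hUopen hLb hq) (diffAt_of_contDiffOn hUopen hLc hq)
  have e3 : pdx (pdy (fun q => Real.log (b q * c q))) p
      = pdx (pdy Lb) p + pdx (pdy Lc) p := by
    have := pdx_congrOn (f := pdy (fun r => Real.log (b r * c r)))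
      (g := fun q => pdy Lb q + pdy Lc q) hUopen hp e2
    rw [this]
    exact pdx_add (diffAt_of_contDiffOn hUopen hpdyLb hp)
      (diffAt_of_contDiffOn hUopen hpdyLc hp)
  have hFp : F p = 1 / (b p * c p) * pdx (pdy Lc) p := by rw [hFdef]
  rw [e3, hAB p hp, ← hconst p hp, hFp]
  have hb0 := hbne p hp
  have hc0 := hcne p hp
  field_simp
  ring
end

section
/- Let b(x,y) = 4k₁(k₁y + k₂)/(4x + k₃)², c(x,y) = (4x + k₃)/(k₁y + k₂)², μ = ν = 0, where k₁, k₂, k₃ are real constants, defined on a domain where 4x + k₃ ≠ 0 and k₁y + k₂ ≠ 0. Then the three integrability conditions -2 b_y ν - b ν_y - μ_yy + μ_x c + 2 μ c_x + ν_xx = 0, -2 b_y c - b c_y + c_xx + 2 ν_x = 0, and -2 μ_y - b_yy + b_x c + 2 b c_x = 0 all hold identically. -/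
/-!
`b` is affine in `y` and `c` is affine in `x`, so `b_yy = c_xx = 0`, and with `μ = ν = 0` the
first condition is trivial. The remaining two reduce to the rational identities
`2 b_y c + b c_y = 0` and `b_x c + 2 b c_x = 0`, which follow from the explicit first partial
derivatives of `b` and `c`.
-/

lemma hasDerivAt_div_affine_sq (C a d t : ℝ) (h : a * t + d ≠ 0) :
    HasDerivAt (fun s => C / (a * s + d) ^ 2) (-2 * a * C / (a * t + d) ^ 3) t := by
  have hlin : HasDerivAt (fun s => a * s + d) a t := by
    simpa using ((hasDerivAt_id t).const_mul a).add_const d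
  refine ((hasDerivAt_const t C).div (hlin.pow 2) (pow_ne_zero 2 h)).congr_deriv ?_
  simp only [Pi.pow_apply]
  field_simp
  ring

lemma hasDerivAt_mul_affine_div (e a d D t : ℝ) :
    HasDerivAt (fun s => e * (a * s + d) / D) (e * a / D) t := by
  simpa using ((((hasDerivAt_id t).const_mul a).add_const d).const_mul e).div_const D

lemma pdx_const (a : ℝ) : pdx (fun _ => a) = fun _ => 0 := by
  funext p
  exact deriv_const p.1 a

lemma pdy_const (a : ℝ) : pdy (fun _ => a) = fun _ => 0 := by
  funext p
  exact deriv_const p.2 a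

lemma pdx_comp_snd (g : ℝ → ℝ) : pdx (fun q => g q.2) = fun _ => 0 := by
  funext p
  exact deriv_const p.1 (g p.2)

lemma pdy_comp_fst (g : ℝ → ℝ) : pdy (fun q => g q.1) = fun _ => 0 := by
  funext p
  exact deriv_const p.2 (g p.1)

section ExampleFamily

variable (k1 k2 k3 : ℝ)

noncomputable def exampleB : ℝ × ℝ → ℝ := fun p => 4 * k1 * (k1 * p.2 + k2) / (4 * p.1 + k3) ^ 2

noncomputable def exampleC : ℝ × ℝ → ℝ := fun p => (4 * p.1 + k3) / (k1 * p.2 + k2) ^ 2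

lemma pdx_exampleB (p : ℝ × ℝ) (hx : 4 * p.1 + k3 ≠ 0) :
    pdx (exampleB k1 k2 k3) p = -2 * 4 * (4 * k1 * (k1 * p.2 + k2)) / (4 * p.1 + k3) ^ 3 :=
  (hasDerivAt_div_affine_sq (4 * k1 * (k1 * p.2 + k2)) 4 k3 p.1 hx).deriv

lemma pdy_exampleB :
    pdy (exampleB k1 k2 k3) = fun p => 4 * k1 * k1 / (4 * p.1 + k3) ^ 2 := by
  funext p
  exact (hasDerivAt_mul_affine_div (4 * k1) k1 k2 ((4 * p.1 + k3) ^ 2) p.2).deriv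

lemma pdx_exampleC :
    pdx (exampleC k1 k2 k3) = fun p => 4 / (k1 * p.2 + k2) ^ 2 := by
  funext p
  have h := hasDerivAt_mul_affine_div 1 4 k3 ((k1 * p.2 + k2) ^ 2) p.1
  simp only [one_mul] at h
  exact h.deriv

lemma pdy_exampleC (p : ℝ × ℝ) (hy : k1 * p.2 + k2 ≠ 0) :
    pdy (exampleC k1 k2 k3) p = -2 * k1 * (4 * p.1 + k3) / (k1 * p.2 + k2) ^ 3 :=
  (hasDerivAt_div_affine_sq (4 * p.1 + k3) k1 k2 p.2 hy).deriv

end ExampleFamily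

theorem integrability_of_example_family
    (k1 k2 k3 : ℝ) (b c μ ν : ℝ × ℝ → ℝ)
    (hb : b = fun p => 4 * k1 * (k1 * p.2 + k2) / (4 * p.1 + k3) ^ 2)
    (hc : c = fun p => (4 * p.1 + k3) / (k1 * p.2 + k2) ^ 2)
    (hμ : μ = fun _ => 0) (hν : ν = fun _ => 0) :
    ∀ p : ℝ × ℝ, 4 * p.1 + k3 ≠ 0 → k1 * p.2 + k2 ≠ 0 →
      (-2 * pdy b p * ν p - b p * pdy ν p - pdy (pdy μ) p
          + pdx μ p * c p + 2 * μ p * pdx c p + pdx (pdx ν) p = 0) ∧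
      (-2 * pdy b p * c p - b p * pdy c p + pdx (pdx c) p + 2 * pdx ν p = 0) ∧
      (-2 * pdy μ p - pdy (pdy b) p + pdx b p * c p + 2 * b p * pdx c p = 0) := by
  obtain rfl : b = exampleB k1 k2 k3 := hb
  obtain rfl : c = exampleC k1 k2 k3 := hc
  subst hμ hν
  intro p hx hy
  refine ⟨by simp [pdx_const, pdy_const], ?_, ?_⟩
  · rw [pdy_exampleB, pdy_exampleC k1 k2 k3 p hy, pdx_exampleC,
      pdx_comp_snd (fun y => 4 / (k1 * y + k2) ^ 2), pdx_const]
    simp only [exampleB, exampleC]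
    field_simp
    ring
  · rw [pdy_exampleB, pdy_comp_fst (fun x => 4 * k1 * k1 / (4 * x + k3) ^ 2), pdy_const,
      pdx_exampleB k1 k2 k3 p hx, pdx_exampleC]
    simp only [exampleB, exampleC]
    field_simp
    ring
end

section
/- Let b, c, μ, ν be smooth functions of (x,y) with c = ν = 0 identically, b of the form b(x,y) = α(x)y² + β(x)y + γ(x) and μ(x,y) = -α(x)y + δ(x) (the general ruled surface canonical system). Define the curvature matrix R̄ = [[0, -μ_y, 0], [0, 0, 0], [0, -(b_y+μ), 0]] dx∧dy (substituting c = ν = 0, bc = 0, c_x + ν = 0, cμ + ν_x = 0). Then ∇̄_{∂_y} R̄ = 0, i.e., the curvature is covariantly constant in the ruling direction ∂_y, where ∇̄ is induced by the connection matrix ω̄ = [[0, dx, dy],[μ dx, 0, b dx],[0, 0, 0]]. -/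
open Matrix

/-- Curvature coefficient matrix for a ruled surface (c = ν = 0):
R̄ = [[0, −μ_y, 0],[0,0,0],[0, −(b_y+μ), 0]]. -/
noncomputable def Rmat (b μ : ℝ × ℝ → ℝ) (p : ℝ × ℝ) : Matrix (Fin 3) (Fin 3) ℝ :=
  !![0, -(pdy μ p), 0;
     0, 0, 0;
     0, -(pdy b p + μ p), 0]

/-- The connection matrix ω̄ = [[0,dx,dy],[μdx,0,bdx],[0,0,0]] contracted with ∂_y. -/
noncomputable def omOfY : Matrix (Fin 3) (Fin 3) ℝ :=
  !![0, 0, 1; 0, 0, 0; 0, 0, 0]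

/-- ∇̄_{∂_y} R̄ : derivative of the coefficients plus the commutator with the
connection matrix (row-frame convention: the connection acts on coefficient
matrices through the transpose ω̄(∂_y)ᵀ). -/
noncomputable def covDerY (b μ : ℝ × ℝ → ℝ) (p : ℝ × ℝ) : Matrix (Fin 3) (Fin 3) ℝ :=
  (Matrix.of fun i j => pdy (fun q => Rmat b μ q i j) p)
    + (omOfYᵀ * Rmat b μ p - Rmat b μ p * omOfYᵀ)

lemma pdy_constx (f : ℝ → ℝ) (p : ℝ × ℝ) : pdy (fun q => f q.1) p = 0 := by
  simp [pdy]

lemma pdy_zero (p : ℝ × ℝ) : pdy (fun _ => (0:ℝ)) p = 0 := by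
  simp [pdy]

theorem ruled_surface_curvature_covariantly_constant_along_ruling
    (α β γ δ : ℝ → ℝ)
    (hα : ContDiff ℝ (⊤ : ℕ∞) α) (hβ : ContDiff ℝ (⊤ : ℕ∞) β)
    (hγ : ContDiff ℝ (⊤ : ℕ∞) γ) (hδ : ContDiff ℝ (⊤ : ℕ∞) δ)
    (b μ c ν : ℝ × ℝ → ℝ)
    (hb : b = fun p => α p.1 * p.2 ^ 2 + β p.1 * p.2 + γ p.1)
    (hμ : μ = fun p => -(α p.1) * p.2 + δ p.1)
    (hc : c = fun _ => 0) (hν : ν = fun _ => 0) :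
    ∀ p : ℝ × ℝ, covDerY b μ p = 0 := by
  have hpb : ∀ q : ℝ × ℝ, pdy b q = α q.1 * (2 * q.2) + β q.1 := by
    intro q
    have hA : HasDerivAt (fun t : ℝ => α q.1 * t ^ 2) (α q.1 * (2 * q.2)) q.2 := by
      simpa using (hasDerivAt_pow 2 q.2).const_mul (α q.1)
    have hB : HasDerivAt (fun t : ℝ => β q.1 * t + γ q.1) (β q.1) q.2 := by
      simpa using ((hasDerivAt_id q.2).const_mul (β q.1)).add_const (γ q.1)
    have h := (hA.add hB).deriv
    simp only [pdy, hb]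
    simpa [add_assoc, Pi.add_def] using h
  have hpμ : ∀ q : ℝ × ℝ, pdy μ q = -(α q.1) := by
    intro q
    have h : HasDerivAt (fun t : ℝ => -(α q.1) * t + δ q.1) (-(α q.1)) q.2 := by
      simpa using ((hasDerivAt_id q.2).const_mul (-(α q.1))).add_const (δ q.1)
    simp only [pdy, hμ]
    simpa using h.deriv
  have hR : ∀ q : ℝ × ℝ, Rmat b μ q
      = !![0, α q.1, 0; 0, 0, 0; 0, -(α q.1 * q.2 + β q.1 + δ q.1), 0] := by
    intro q
    ext i j
    fin_cases i <;> fin_cases j <;>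
      simp only [Rmat, hpb, hpμ] <;> simp [hμ, Matrix.vecHead, Matrix.vecTail] <;> ring
  intro p
  have hE : ∀ q : ℝ × ℝ, -(α q.1 * q.2 + β q.1 + δ q.1)
      = -(α q.1) * q.2 + (-(β q.1) - δ q.1) := by intro q; ring
  have hd21 : pdy (fun q => -(α q.1 * q.2 + β q.1 + δ q.1)) p = -(α p.1) := by
    have h : HasDerivAt (fun t : ℝ => -(α p.1) * t + (-(β p.1) - δ p.1)) (-(α p.1)) p.2 := by
      simpa using ((hasDerivAt_id p.2).const_mul (-(α p.1))).add_const (-(β p.1) - δ p.1)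
    simp only [pdy, hE]
    simpa using h.deriv
  have hT : omOfYᵀ = !![(0:ℝ), 0, 0; 0, 0, 0; 1, 0, 0] := by
    ext i j
    fin_cases i <;> fin_cases j <;>
      simp [omOfY, Matrix.vecHead, Matrix.vecTail, Function.comp]
  have hd21' : pdy (fun q : ℝ × ℝ => -δ q.1 + (-β q.1 + -(α q.1 * q.2))) p = -α p.1 := by
    have h : HasDerivAt (fun t : ℝ => -δ p.1 + (-β p.1 + -(α p.1 * t))) (-α p.1) p.2 := by
      have h0 : HasDerivAt (fun t : ℝ => -(α p.1 * t)) (-α p.1) p.2 := by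
        simpa [Pi.neg_def] using (((hasDerivAt_id p.2).const_mul (α p.1))).neg
      simpa using (h0.const_add (-β p.1)).const_add (-δ p.1)
    simp only [pdy]
    simpa using h.deriv
  ext i j
  fin_cases i <;> fin_cases j <;>
    simp [covDerY, hR, hT, hd21, hd21', pdy_constx, pdy_zero, Matrix.mul_apply,
      Fin.sum_univ_three, Matrix.vecHead, Matrix.vecTail]
end
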